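/- The shift dominates every move: if X ≼ Y are admissible configurations and 1 ≤ ξ ≤ ∞, then Φ_ξ(X) ≼ τ(Y), where τ is the shift (τY)(j) = Y(j−1). -/

import Mathlib

open scoped Classical

/-- A configuration of the infinite-bin model: number of balls in each bin. -/
abbrev Config := ℤ → ℕ∞

/-- Admissible configuration: nonempty bins form a semi-infinite interval, and
every bin to the left of an infinite bin is infinite. -/
def IsAdmissible (X : Config) : Prop :=
  (∃ m : ℤ, ∀ j : ℤ, X j ≠ 0 ↔ j ≤ m) ∧ ∀ j : ℤ, X j = ⊤ → X (j - 1) = ⊤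

/-- N(X,k): number of balls in bins of index ≥ k. -/
noncomputable def Nballs (X : Config) (k : ℤ) : ℕ∞ := ∑' j : {j : ℤ // k ≤ j}, X j

/-- B(X,ξ): leftmost position such that there are fewer than ξ balls to its right. -/
noncomputable def Bpos (X : Config) (ξ : ℕ) : ℤ := sInf {j : ℤ | Nballs X j < (ξ : ℕ∞)}

/-- The move of type ξ: add one ball in the bin of index B(X,ξ). -/
noncomputable def Phi (ξ : ℕ) (X : Config) : Config :=
  fun j => X j + (if j = Bpos X ξ then 1 else 0)

/-- The move of type ξ ∈ ℕ ∪ {∞}, with Φ_∞ = id. -/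
noncomputable def PhiE (ξ : ℕ∞) (X : Config) : Config :=
  if ξ = ⊤ then X else Phi ξ.toNat X

/-- The shift operator τ. -/
def shift (X : Config) : Config := fun j => X (j - 1)

/-- The partial order on configurations: X ≼ Y iff N(X,j) ≤ N(Y,j) for all j. -/
def ConfLE (X Y : Config) : Prop := ∀ j : ℤ, Nballs X j ≤ Nballs Y j

/-!
For `j > B(X,ξ)` the move does not change `N(·,j)`, and for `j ≤ B(X,ξ)` it raises it by one;
in the latter case `N(X,j-1) ≥ ξ ≥ 1` by minimality of `B`, so by admissibility bin `j-1` of `X`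
is nonempty and `N(X,j) + 1 ≤ N(X,j-1)`. Hence `N(Φ_ξ X, j) ≤ N(X, j-1) ≤ N(Y, j-1) = N(τY, j)`.
-/

theorem ENat.summable {ι : Type*} (f : ι → ℕ∞) : Summable f :=
  ⟨_, hasSum_of_isLUB _ (isLUB_iSup (f := fun s : Finset ι => ∑ i ∈ s, f i))⟩

noncomputable def Int.natEquivIci (k : ℤ) : ℕ ≃ {i : ℤ // k ≤ i} where
  toFun n := ⟨k + n, by omega⟩
  invFun i := (i.1 - k).toNat
  left_inv n := by simp
  right_inv i := Subtype.ext (by have := i.2; simp only; omega)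

theorem nballs_eq_tsum_nat (X : Config) (k : ℤ) : Nballs X k = ∑' n : ℕ, X (k + n) :=
  ((Int.natEquivIci k).tsum_eq (fun i => X i)).symm

theorem nballs_eq_add_nballs_add_one (X : Config) (k : ℤ) :
    Nballs X k = X k + Nballs X (k + 1) := by
  rw [nballs_eq_tsum_nat, nballs_eq_tsum_nat, tsum_eq_zero_add' (ENat.summable _)]
  congr 1
  · simp
  · exact tsum_congr fun n => by push_cast; ring_nf

theorem nballs_antitone (X : Config) : Antitone (Nballs X) :=
  antitone_int_of_succ_le fun k => by
    rw [nballs_eq_add_nballs_add_one X k]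
    exact le_add_self

theorem nballs_shift (Y : Config) (j : ℤ) : Nballs (shift Y) j = Nballs Y (j - 1) := by
  rw [nballs_eq_tsum_nat, nballs_eq_tsum_nat]
  exact tsum_congr fun n => congrArg Y (by ring)

theorem nballs_add (X Z : Config) (k : ℤ) : Nballs (X + Z) k = Nballs X k + Nballs Z k :=
  (ENat.summable _).tsum_add (ENat.summable _)

theorem nballs_single (b k : ℤ) : Nballs (Pi.single b 1) k = if k ≤ b then 1 else 0 := by
  split_ifs with hkb
  · refine (tsum_congr fun j => ?_).trans (tsum_pi_single (⟨b, hkb⟩ : {j : ℤ // k ≤ j}) 1)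
    simp only [Pi.single_apply, Subtype.ext_iff]
  · refine (tsum_congr fun j => ?_).trans tsum_zero
    exact Pi.single_eq_of_ne (by have := j.2; omega) _

theorem phi_eq_add_single (q : ℕ) (X : Config) : Phi q X = X + Pi.single (Bpos X q) 1 := by
  ext j
  simp [Phi, Pi.single_apply]

theorem nballs_phi (q : ℕ) (X : Config) (k : ℤ) :
    Nballs (Phi q X) k = Nballs X k + if k ≤ Bpos X q then 1 else 0 := by
  rw [phi_eq_add_single, nballs_add, nballs_single]

theorem nballs_eq_zero_of_lt {X : Config} {m : ℤ} (hm : ∀ j, X j ≠ 0 ↔ j ≤ m) {k : ℤ} (hk : m < k) :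
    Nballs X k = 0 := by
  rw [nballs_eq_tsum_nat]
  exact (tsum_congr fun n => not_not.mp fun h => by have := (hm _).mp h; omega).trans tsum_zero

theorem natCast_le_nballs {X : Config} {m : ℤ} (hm : ∀ j, X j ≠ 0 ↔ j ≤ m) (n : ℕ) :
    (n : ℕ∞) ≤ Nballs X (m + 1 - n) := by
  induction n with
  | zero => exact zero_le
  | succ n ih =>
    have hbin : 1 ≤ X (m - n) := Order.one_le_iff_ne_zero.mpr ((hm _).mpr (by omega))
    rw [show m + 1 - ((n + 1 : ℕ) : ℤ) = m - n by push_cast; ring,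
      nballs_eq_add_nballs_add_one, show m - n + 1 = m + 1 - n by ring, Nat.cast_succ, add_comm]
    exact add_le_add hbin ih

namespace IsAdmissible

variable {X : Config}

theorem ne_zero_of_nballs_ne_zero (hX : IsAdmissible X) {k : ℤ} (hk : Nballs X k ≠ 0) :
    X k ≠ 0 := by
  obtain ⟨m, hm⟩ := hX.1
  intro h0
  exact hk (nballs_eq_zero_of_lt hm (not_le.mp fun hkm => (hm k).mpr hkm h0))

theorem nballs_add_one_le_nballs_sub_one (hX : IsAdmissible X) {j : ℤ}
    (hj : Nballs X (j - 1) ≠ 0) : Nballs X j + 1 ≤ Nballs X (j - 1) := by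
  have hbin := Order.one_le_iff_ne_zero.mpr (hX.ne_zero_of_nballs_ne_zero hj)
  rw [nballs_eq_add_nballs_add_one X (j - 1), sub_add_cancel, add_comm]
  exact add_le_add_left hbin _

theorem bddBelow_setOf_nballs_lt (hX : IsAdmissible X) (q : ℕ) :
    BddBelow {j | Nballs X j < q} := by
  obtain ⟨m, hm⟩ := hX.1
  refine ⟨m + 1 - q, fun i hi => not_lt.mp fun hiq => ?_⟩
  exact (natCast_le_nballs hm q).not_gt ((nballs_antitone X hiq.le).trans_lt hi)

theorem le_nballs_of_lt_bpos (hX : IsAdmissible X) {q : ℕ} {i : ℤ} (hi : i < Bpos X q) :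
    (q : ℕ∞) ≤ Nballs X i :=
  not_lt.mp fun h => hi.not_ge (csInf_le (hX.bddBelow_setOf_nballs_lt q) h)

theorem nballs_phi_le_nballs_sub_one (hX : IsAdmissible X) {q : ℕ} (hq : q ≠ 0) (j : ℤ) :
    Nballs (Phi q X) j ≤ Nballs X (j - 1) := by
  rw [nballs_phi]
  split_ifs with hjB
  · have hpos : (0 : ℕ∞) < q := by exact_mod_cast Nat.pos_of_ne_zero hq
    exact hX.nballs_add_one_le_nballs_sub_one
      (hpos.trans_le (hX.le_nballs_of_lt_bpos (by omega))).ne'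
  · rw [add_zero]
    exact nballs_antitone X (by omega)

theorem nballs_phiE_le_nballs_sub_one (hX : IsAdmissible X) {ξ : ℕ∞} (hξ : 1 ≤ ξ) (j : ℤ) :
    Nballs (PhiE ξ X) j ≤ Nballs X (j - 1) := by
  unfold PhiE
  split_ifs with htop
  · exact nballs_antitone X (by omega)
  · exact hX.nballs_phi_le_nballs_sub_one
      (ENat.toNat_pos (Order.one_le_iff_ne_zero.mp hξ) htop).ne' j

end IsAdmissible

theorem phiE_le_shift_general (X Y : Config) (hX : IsAdmissible X)
    (hXY : ConfLE X Y) (ξ : ℕ∞) (hξ : 1 ≤ ξ) :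
    ConfLE (PhiE ξ X) (shift Y) := fun j => by
  rw [nballs_shift]
  exact (hX.nballs_phiE_le_nballs_sub_one hξ j).trans (hXY (j - 1))

/-- The shift dominates every move: if X ≼ Y and 1 ≤ ξ ≤ ∞ then Φ_ξ(X) ≼ τ(Y). -/
theorem phiE_le_shift (X Y : Config) (hX : IsAdmissible X) (hY : IsAdmissible Y)
    (hXY : ConfLE X Y) (ξ : ℕ∞) (hξ : 1 ≤ ξ) :
    ConfLE (PhiE ξ X) (shift Y) :=
  phiE_le_shift_general X Y hX hXY ξ hξ
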